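/- Let P be a smooth reflexive polytope of dimension n. Then the sum of all vertices of the dual polytope P* is zero: Σ_{u ∈ V(P*)} u = 0. -/

import Mathlib

open Set Pointwise

namespace Fano

/-- The ambient rational vector space `N_ℚ = ℚⁿ` (identified with its dual `M_ℚ`). -/
abbrev E (n : ℕ) : Type := Fin n → ℚ

/-- The standard pairing `⟨x, y⟩ = ∑ i, x i * y i` between `N_ℚ` and `M_ℚ`. -/
def pairing {n : ℕ} (x y : E n) : ℚ := ∑ i, x i * y i

/-- A point of `ℚⁿ` is a lattice point if all its coordinates are integers. -/
def IsLatticePt {n : ℕ} (x : E n) : Prop := ∀ i, ∃ z : ℤ, x i = (z : ℚ)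

/-- A lattice polytope: the convex hull of finitely many lattice points. -/
def IsLatticePolytope {n : ℕ} (P : Set (E n)) : Prop :=
  ∃ S : Finset (E n), (∀ x ∈ S, IsLatticePt x) ∧ P = convexHull ℚ (S : Set (E n))

/-- The dual polytope `P* = {y | ⟨x, y⟩ ≥ -1 for all x ∈ P}`. -/
def dualPolytope {n : ℕ} (P : Set (E n)) : Set (E n) :=
  {y | ∀ x ∈ P, -1 ≤ pairing x y}

/-- The set of vertices (= extreme points) of a polytope. -/
def vertices {n : ℕ} (P : Set (E n)) : Set (E n) := Set.extremePoints ℚ P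

/-- `F` is a (nonempty, proper) face of `P`: it is cut out by a supporting hyperplane. -/
def IsFace {n : ℕ} (P F : Set (E n)) : Prop :=
  ∃ (u : E n) (c : ℚ), (∀ x ∈ P, c ≤ pairing x u) ∧
    F = {x ∈ P | pairing x u = c} ∧ F.Nonempty ∧ F ≠ P

/-- A facet of an `n`-dimensional polytope: a face of dimension `n - 1`. -/
def IsFacet {n : ℕ} (P F : Set (E n)) : Prop :=
  IsFace P F ∧ Module.finrank ℚ (affineSpan ℚ F).direction = n - 1

/-- A reflexive polytope: a lattice polytope containing the origin in its interior
(hence of full dimension `n`) whose dual polytope is again a lattice polytope. -/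
def IsReflexivePolytope {n : ℕ} (P : Set (E n)) : Prop :=
  IsLatticePolytope P ∧ (0 : E n) ∈ interior P ∧ IsLatticePolytope (dualPolytope P)

/-- A polytope is simplicial if every facet has exactly `n` vertices
and these are linearly independent. -/
def IsSimplicial {n : ℕ} (P : Set (E n)) : Prop :=
  ∀ F : Set (E n), IsFacet P F →
    ∃ e : Fin n → E n, vertices F = Set.range e ∧ LinearIndependent ℚ e

/-- For `u ∈ V(P*)`, the corresponding facet `F_u = {x ∈ P | ⟨x, u⟩ = -1}` of `P`. -/
def facetOf {n : ℕ} (P : Set (E n)) (u : E n) : Set (E n) :=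
  {x ∈ P | pairing x u = -1}

/-- `δ` is the quantity `δ_P = min{⟨v,u⟩ | v ∈ V(P), u ∈ V(P*), v ∉ F_u}`. -/
def IsDeltaOf {n : ℕ} (P : Set (E n)) (δ : ℚ) : Prop :=
  (∃ v ∈ vertices P, ∃ u ∈ vertices (dualPolytope P), v ∉ facetOf P u ∧ pairing v u = δ) ∧
  (∀ v ∈ vertices P, ∀ u ∈ vertices (dualPolytope P), v ∉ facetOf P u → δ ≤ pairing v u)

/-- A vertex `v` is adjacent to a facet `F = Conv(e₁, …, eₙ)` of a simplicial polytope if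
replacing some vertex of `F` by `v` again yields a facet of `P`. -/
def AdjacentTo {n : ℕ} (P : Set (E n)) (v : E n) (F : Set (E n)) : Prop :=
  ∃ w ∈ vertices F, IsFacet P (convexHull ℚ (insert v (vertices F \ {w})))

/-- A smooth (reflexive) polytope: a reflexive polytope such that the vertices of every
facet form a `ℤ`-basis of the lattice `N = ℤⁿ`. -/
def IsSmoothPolytope {n : ℕ} (P : Set (E n)) : Prop :=
  IsReflexivePolytope P ∧
  ∀ F : Set (E n), IsFacet P F →
    ∃ e : Fin n → E n, vertices F = Set.range e ∧ (∀ i, IsLatticePt (e i)) ∧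
      LinearIndependent ℚ e ∧
      ∀ x : E n, IsLatticePt x → ∃ c : Fin n → ℤ, x = ∑ i, (c i : ℚ) • e i

section Aux
variable {n : ℕ}

open Finset in
lemma pairing_comm (x y : E n) : pairing x y = pairing y x := by
  unfold pairing; exact Finset.sum_congr rfl (fun i _ => mul_comm _ _)

/-- pairing as a linear map in the first argument. -/
def pairL (y : E n) : E n →ₗ[ℚ] ℚ where
  toFun x := pairing x y
  map_add' a b := by unfold pairing; simp [add_mul, Finset.sum_add_distrib]
  map_smul' c a := by unfold pairing; simp [Finset.mul_sum, mul_assoc]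

@[simp] lemma pairL_apply (y x : E n) : pairL y x = pairing x y := rfl

lemma pairing_add_left (a b y : E n) : pairing (a + b) y = pairing a y + pairing b y :=
  (pairL y).map_add a b

lemma pairing_smul_left (c : ℚ) (a y : E n) : pairing (c • a) y = c * pairing a y :=
  (pairL y).map_smul c a

lemma pairing_add_right (x a b : E n) : pairing x (a + b) = pairing x a + pairing x b := by
  rw [pairing_comm, pairing_add_left, pairing_comm a x, pairing_comm b x]

lemma pairing_smul_right (c : ℚ) (x a : E n) : pairing x (c • a) = c * pairing x a := by
  rw [pairing_comm, pairing_smul_left, pairing_comm]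

lemma pairing_neg_right (x a : E n) : pairing x (-a) = - pairing x a := by
  have := pairing_smul_right (-1) x a; simpa using this

lemma pairing_sum_left {ι : Type*} (s : Finset ι) (f : ι → E n) (y : E n) :
    pairing (∑ i ∈ s, f i) y = ∑ i ∈ s, pairing (f i) y :=
  map_sum (pairL y) f s

lemma pairing_sum_right {ι : Type*} (s : Finset ι) (f : ι → E n) (x : E n) :
    pairing x (∑ i ∈ s, f i) = ∑ i ∈ s, pairing x (f i) := by
  rw [pairing_comm, pairing_sum_left]; exact Finset.sum_congr rfl fun i _ => pairing_comm _ _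

lemma pairing_single_left (a : Fin n) (w : E n) : pairing (Pi.single a 1) w = w a := by
  unfold pairing
  rw [Finset.sum_eq_single a]
  · simp
  · intro b _ hb; simp [Pi.single_apply, hb]
  · intro h; exact absurd (Finset.mem_univ a) h

lemma eq_sum_single (x : E n) : x = ∑ i, x i • (Pi.single i (1:ℚ) : E n) := by
  funext j
  simp [Pi.single_apply, Finset.sum_apply]

/-- Represent a linear functional as a vector via the pairing. -/
lemma exists_repr_vec (l : E n →ₗ[ℚ] ℚ) : ∃ w : E n, ∀ x, pairing x w = l x := by
  refine ⟨fun i => l (Pi.single i 1), fun x => ?_⟩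
  conv_rhs => rw [eq_sum_single x]
  rw [map_sum]
  unfold pairing
  exact Finset.sum_congr rfl fun i _ => by simp

lemma pairing_self_nonneg (x : E n) : 0 ≤ pairing x x :=
  Finset.sum_nonneg fun i _ => mul_self_nonneg _

lemma eq_zero_of_pairing_all {w : E n} (h : ∀ x, pairing x w = 0) : w = 0 := by
  funext a
  have := h (Pi.single a 1)
  rwa [pairing_single_left] at this

end Aux

section Hull
variable {n : ℕ}

/-- A linear lower bound on a hull follows from the bound on the generators. -/
lemma hull_le_bound {S : Set (E n)} (l : E n →ₗ[ℚ] ℚ) (c : ℚ)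
    (h : ∀ v ∈ S, c ≤ l v) : ∀ x ∈ convexHull ℚ S, c ≤ l x := by
  intro x hx
  have hconv : Convex ℚ {x : E n | c ≤ l x} :=
    convex_halfSpace_ge (IsLinearMap.mk l.map_add (fun a b => l.map_smul a b)) c
  exact convexHull_min h hconv hx

/-- Exposed face of a finite hull is the hull of the active generators. -/
lemma face_hull_eq (S : Finset (E n)) (l : E n →ₗ[ℚ] ℚ) (c : ℚ)
    (h : ∀ v ∈ S, c ≤ l v) :
    {x ∈ convexHull ℚ (S : Set (E n)) | l x = c}
      = convexHull ℚ ({v ∈ S | l v = c} : Finset (E n)) := by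
  classical
  apply Set.Subset.antisymm
  · rintro x ⟨hx, hlx⟩
    rw [Finset.convexHull_eq] at hx
    obtain ⟨w, hw0, hw1, hxc⟩ := hx
    have hcm : S.centerMass w id = ∑ v ∈ S, w v • v := by
      rw [Finset.centerMass_eq_of_sum_1 _ _ hw1]; rfl
    have hxval : x = ∑ v ∈ S, w v • v := by rw [← hxc, hcm]
    have hl : ∑ v ∈ S, w v * (l v - c) = 0 := by
      have : l x = ∑ v ∈ S, w v * l v := by
        rw [hxval, map_sum]; exact Finset.sum_congr rfl fun v _ => l.map_smul _ _
      have hsum : ∑ v ∈ S, w v * (l v - c) = (∑ v ∈ S, w v * l v) - c := by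
        simp only [mul_sub]
        rw [Finset.sum_sub_distrib, ← Finset.sum_mul, hw1, one_mul]
      rw [hsum, ← this, hlx, sub_self]
    have hzero : ∀ v ∈ S, w v * (l v - c) = 0 := by
      intro v hv
      have := (Finset.sum_eq_zero_iff_of_nonneg
        (fun v hv => mul_nonneg (hw0 v hv) (sub_nonneg.2 (h v hv)))).1 hl
      exact this v hv
    set T : Finset (E n) := {v ∈ S | l v = c} with hT
    have hsub : T ⊆ S := Finset.filter_subset _ _
    have hzero' : ∀ v ∈ S, v ∉ T → w v = 0 := by
      intro v hv hvT
      rcases mul_eq_zero.1 (hzero v hv) with h0 | h0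
      · exact h0
      · exfalso; exact hvT (Finset.mem_filter.2 ⟨hv, by linarith [sub_eq_zero.1 h0]⟩)
    have hw1' : ∑ v ∈ T, w v = 1 := by
      rw [← hw1]
      exact Finset.sum_subset hsub (fun v hv hvT => hzero' v hv hvT)
    have : T.centerMass w id = S.centerMass w id :=
      Finset.centerMass_subset id hsub (fun v hv hvT => hzero' v hv hvT)
    rw [← hxc, ← this]
    exact T.centerMass_mem_convexHull (fun v hv => hw0 v (hsub hv))
      (by rw [hw1']; norm_num) (fun v hv => Finset.mem_coe.2 hv)
  · intro x hx
    have hsub1 : (({v ∈ S | l v = c} : Finset (E n)) : Set (E n)) ⊆ (S : Set (E n)) := by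
      intro v hv; exact Finset.mem_coe.2 (Finset.filter_subset _ _ (Finset.mem_coe.1 hv))
    refine ⟨convexHull_mono hsub1 hx, ?_⟩
    have hconv : Convex ℚ {x : E n | l x = c} :=
      convex_hyperplane (IsLinearMap.mk l.map_add (fun a b => l.map_smul a b)) c
    refine convexHull_min ?_ hconv hx
    intro v hv
    exact (Finset.mem_filter.1 (Finset.mem_coe.1 hv)).2

/-- An exposed subset is an extreme subset. -/
lemma isExtreme_of_exposed {A : Set (E n)} (l : E n →ₗ[ℚ] ℚ) (c : ℚ)
    (h : ∀ v ∈ A, c ≤ l v) (hne : True) :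
    IsExtreme ℚ A {x ∈ A | l x = c} := by
  constructor
  · exact fun x hx => hx.1
  · rintro x₁ hx₁ x₂ hx₂ x ⟨hxA, hlx⟩ hseg
    obtain ⟨a, b, ha, hb, hab, hx⟩ := hseg
    have h1 : c ≤ l x₁ := h _ hx₁
    have h2 : c ≤ l x₂ := h _ hx₂
    have hval : a * l x₁ + b * l x₂ = c := by
      have : l x = a * l x₁ + b * l x₂ := by
        rw [← hx, l.map_add, l.map_smul, l.map_smul]; rfl
      rw [← this, hlx]
    have he1 : l x₁ = c := by
      by_contra hne1
      have hgt : c < l x₁ := lt_of_le_of_ne h1 (Ne.symm hne1)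
      have h1' : a * c < a * l x₁ := (mul_lt_mul_iff_right₀ ha).2 hgt
      have h2' : b * c ≤ b * l x₂ := (mul_le_mul_iff_right₀ hb).2 h2
      have hcc : a * c + b * c = c := by rw [← add_mul, hab, one_mul]
      linarith
    have he2 : l x₂ = c := by
      by_contra hne2
      have hgt : c < l x₂ := lt_of_le_of_ne h2 (Ne.symm hne2)
      have h2' : b * c < b * l x₂ := (mul_lt_mul_iff_right₀ hb).2 hgt
      have h1' : a * c ≤ a * l x₁ := (mul_le_mul_iff_right₀ ha).2 h1
      have hcc : a * c + b * c = c := by rw [← add_mul, hab, one_mul]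
      linarith
    exact ⟨hx₁, he1⟩

/-- If a point of a finite set is not extreme in the hull, it is in the hull of the rest. -/
lemma mem_hull_erase {A : Finset (E n)} {a : E n} (ha : a ∈ A)
    (hna : a ∉ Set.extremePoints ℚ (convexHull ℚ (A : Set (E n)))) :
    a ∈ convexHull ℚ ((A.erase a : Finset (E n)) : Set (E n)) := by
  classical
  have haH : a ∈ convexHull ℚ (A : Set (E n)) := subset_convexHull ℚ _ (Finset.mem_coe.2 ha)
  rw [mem_extremePoints] at hna
  push_neg at hna
  obtain ⟨x₁, hx₁, x₂, hx₂, hseg, hne⟩ := hna haH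
  obtain ⟨α, β, hα, hβ, hαβ, hcomb⟩ := hseg
  rw [Finset.convexHull_eq] at hx₁ hx₂
  obtain ⟨w₁, hw₁0, hw₁1, hc₁⟩ := hx₁
  obtain ⟨w₂, hw₂0, hw₂1, hc₂⟩ := hx₂
  set μ : E n → ℚ := fun v => α * w₁ v + β * w₂ v with hμ
  have hμ0 : ∀ v ∈ A, 0 ≤ μ v := fun v hv =>
    add_nonneg (mul_nonneg hα.le (hw₁0 v hv)) (mul_nonneg hβ.le (hw₂0 v hv))
  have hμ1 : ∑ v ∈ A, μ v = 1 := by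
    simp only [hμ, Finset.sum_add_distrib, ← Finset.mul_sum, hw₁1, hw₂1, mul_one, hαβ]
  have hca : A.centerMass μ id = a := by
    rw [Finset.centerMass_eq_of_sum_1 _ _ hμ1]
    have e1 : A.centerMass w₁ id = ∑ v ∈ A, w₁ v • v := by
      rw [Finset.centerMass_eq_of_sum_1 _ _ hw₁1]; rfl
    have e2 : A.centerMass w₂ id = ∑ v ∈ A, w₂ v • v := by
      rw [Finset.centerMass_eq_of_sum_1 _ _ hw₂1]; rfl
    have : ∑ v ∈ A, μ v • v = α • x₁ + β • x₂ := by
      rw [← hc₁, ← hc₂, e1, e2, Finset.smul_sum, Finset.smul_sum, ← Finset.sum_add_distrib]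
      refine Finset.sum_congr rfl fun v _ => ?_
      simp only [hμ, add_smul, smul_smul]
    simp only [id]
    rw [this, hcomb]
  -- weights over A, equal to a, with μ a < 1
  have hw1le : w₁ a ≤ 1 := by
    by_contra hgt
    push_neg at hgt
    have : ∑ v ∈ A, w₁ v ≥ w₁ a := Finset.single_le_sum (fun v hv => hw₁0 v hv) ha
    linarith [hw₁1 ▸ this]
  have hw2le : w₂ a ≤ 1 := by
    by_contra hgt
    push_neg at hgt
    have : ∑ v ∈ A, w₂ v ≥ w₂ a := Finset.single_le_sum (fun v hv => hw₂0 v hv) ha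
    linarith [hw₂1 ▸ this]
  have hμa : μ a < 1 := by
    rcases lt_or_eq_of_le hw1le with h1 | h1
    · have : μ a < α * 1 + β * 1 := by
        apply add_lt_add_of_lt_of_le (by exact (mul_lt_mul_iff_right₀ hα).2 h1)
        exact (mul_le_mul_iff_right₀ hβ).2 hw2le
      simpa [hαβ] using this
    · -- w₁ a = 1 forces x₁ = a
      exfalso
      have hx1a : x₁ = a := by
        have hrest : ∀ v ∈ A, v ≠ a → w₁ v = 0 := by
          intro v hv hva
          by_contra h0
          have hpos : 0 < w₁ v := lt_of_le_of_ne (hw₁0 v hv) (Ne.symm h0)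
          have : 1 < ∑ u ∈ A, w₁ u := by
            have : w₁ a + w₁ v ≤ ∑ u ∈ A, w₁ u := by
              rw [← Finset.sum_pair (a := a) (b := v) (Ne.symm hva)]
              apply Finset.sum_le_sum_of_subset_of_nonneg
              · intro u hu
                rcases Finset.mem_insert.1 hu with rfl | hu
                · exact ha
                · rwa [Finset.mem_singleton.1 hu]
              · intro u hu _; exact hw₁0 u hu
            linarith [h1]
          linarith [hw₁1]
        rw [← hc₁, Finset.centerMass_eq_of_sum_1 _ _ hw₁1]
        simp only [id]
        rw [Finset.sum_eq_single a]
        · rw [h1, one_smul]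
        · intro v hv hva; rw [hrest v hv hva, zero_smul]
        · intro h; exact absurd ha h
      have hx2a : x₂ = a := by
        have h2 : α • a + β • x₂ = a := by rw [hx1a] at hcomb; exact hcomb
        have h3 : β • x₂ = β • a := by
          have h4 : (α + β) • a = a := by rw [hαβ, one_smul]
          rw [add_smul] at h4
          linear_combination (norm := module) h2 - h4
        exact smul_right_injective (E n) (ne_of_gt hβ) h3
      exact (hne hx1a) hx2a
  -- now strip a
  have key : (1 - μ a) • a = ∑ v ∈ A.erase a, μ v • v := by
    have : ∑ v ∈ A, μ v • v = a := by
      have := hca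
      rwa [Finset.centerMass_eq_of_sum_1 _ _ hμ1] at this
    have hsplit : ∑ v ∈ A, μ v • v = μ a • a + ∑ v ∈ A.erase a, μ v • v :=
      (Finset.add_sum_erase _ _ ha).symm
    rw [hsplit] at this
    rw [sub_smul, one_smul, sub_eq_iff_eq_add']
    exact this.symm
  have hpos : 0 < 1 - μ a := by linarith
  set ν : E n → ℚ := fun v => μ v / (1 - μ a) with hν
  have hν0 : ∀ v ∈ A.erase a, 0 ≤ ν v := fun v hv =>
    div_nonneg (hμ0 v (Finset.mem_of_mem_erase hv)) hpos.le
  have hν1 : ∑ v ∈ A.erase a, ν v = 1 := by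
    rw [hν]
    rw [← Finset.sum_div]
    have : ∑ v ∈ A.erase a, μ v = 1 - μ a := by
      have := Finset.add_sum_erase _ μ ha
      linarith [this.symm ▸ hμ1]
    rw [this, div_self hpos.ne']
  have hcν : (A.erase a).centerMass ν id = a := by
    rw [Finset.centerMass_eq_of_sum_1 _ _ hν1]
    simp only [id]
    have : ∑ v ∈ A.erase a, ν v • v = (1-μ a)⁻¹ • ∑ v ∈ A.erase a, μ v • v := by
      rw [Finset.smul_sum]
      refine Finset.sum_congr rfl fun v _ => ?_
      rw [smul_smul, hν]
      congr 1
      field_simp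
    rw [this, ← key, smul_smul, inv_mul_cancel₀ hpos.ne', one_smul]
  have hmem2 := Finset.centerMass_mem_convexHull (A.erase a) hν0 (by rw [hν1]; norm_num)
    (fun v hv => Finset.mem_coe.2 hv)
  rwa [show ((A.erase a).centerMass ν fun v => v) = (A.erase a).centerMass ν id from rfl,
    hcν] at hmem2

/-- Minkowski: a finite hull is the hull of its extreme points. -/
lemma hull_eq_hull_extremePoints (A : Finset (E n)) :
    convexHull ℚ (A : Set (E n))
      = convexHull ℚ (Set.extremePoints ℚ (convexHull ℚ (A : Set (E n)))) := by
  classical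
  induction A using Finset.strongInduction with
  | H A ih =>
    by_cases hall : ∀ a ∈ A, a ∈ Set.extremePoints ℚ (convexHull ℚ (A : Set (E n)))
    · apply Set.Subset.antisymm
      · exact convexHull_mono (fun a ha => hall a (Finset.mem_coe.1 ha)) |>.trans (le_refl _)
      · refine convexHull_min ?_ (convex_convexHull ℚ _)
        exact fun x hx => extremePoints_subset hx
    · push_neg at hall
      obtain ⟨a, ha, hna⟩ := hall
      have hmem := mem_hull_erase ha hna
      have hAe : convexHull ℚ (A : Set (E n))
          = convexHull ℚ ((A.erase a : Finset (E n)) : Set (E n)) := by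
        apply Set.Subset.antisymm
        · refine convexHull_min ?_ (convex_convexHull ℚ _)
          intro v hv
          rcases eq_or_ne v a with rfl | hva
          · exact hmem
          · exact subset_convexHull ℚ _ (Finset.mem_coe.2
              (Finset.mem_erase.2 ⟨hva, Finset.mem_coe.1 hv⟩))
        · exact convexHull_mono (fun v hv =>
            Finset.mem_coe.2 (Finset.mem_of_mem_erase (Finset.mem_coe.1 hv)))
      rw [hAe]
      exact ih (A.erase a) (Finset.erase_ssubset ha)
end Hull

section Dual
variable {n : ℕ}

lemma mem_dualPolytope_hull (S : Finset (E n)) (y : E n) :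
    y ∈ dualPolytope (convexHull ℚ (S : Set (E n))) ↔ ∀ v ∈ S, -1 ≤ pairing v y := by
  constructor
  · intro h v hv; exact h v (subset_convexHull ℚ _ (Finset.mem_coe.2 hv))
  · intro h x hx
    exact hull_le_bound (pairL y) (-1) (fun v hv => h v (Finset.mem_coe.1 hv)) x hx

lemma perturb (S : Finset (E n)) {u w : E n}
    (hu : u ∈ dualPolytope (convexHull ℚ (S : Set (E n))))
    (hw : ∀ v ∈ S, pairing v u = -1 → 0 ≤ pairing v w) :
    ∃ t : ℚ, 0 < t ∧ u + t • w ∈ dualPolytope (convexHull ℚ (S : Set (E n))) := by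
  classical
  have hu' := (mem_dualPolytope_hull S u).1 hu
  set B : Finset (E n) := S.filter (fun v => pairing v w < 0) with hB
  have hf : ∀ v ∈ B, 0 < (pairing v u + 1) / (-pairing v w) := by
    intro v hv
    obtain ⟨hvS, hvw⟩ := Finset.mem_filter.1 hv
    have h1 : -1 ≤ pairing v u := hu' v hvS
    have h2 : pairing v u ≠ -1 := by
      intro h
      exact absurd (hw v hvS h) (not_le.2 hvw)
    have h3 : 0 < pairing v u + 1 := by
      rcases lt_or_eq_of_le h1 with h | h
      · linarith
      · exact absurd h.symm h2
    exact div_pos h3 (by linarith)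
  set t : ℚ := if hne : B.Nonempty then
      min 1 (B.inf' hne (fun v => (pairing v u + 1) / (-pairing v w))) else 1 with ht
  have htpos : 0 < t := by
    rw [ht]
    split_ifs with hne
    · refine lt_min one_pos ?_
      rw [Finset.lt_inf'_iff]
      exact fun v hv => hf v hv
    · exact one_pos
  have htle : ∀ v ∈ B, t ≤ (pairing v u + 1) / (-pairing v w) := by
    intro v hv
    rw [ht]
    rw [dif_pos ⟨v, hv⟩]
    exact le_trans (min_le_right _ _) (Finset.inf'_le _ hv)
  refine ⟨t, htpos, (mem_dualPolytope_hull S _).2 fun v hv => ?_⟩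
  rw [pairing_add_right, pairing_smul_right]
  by_cases hvw : 0 ≤ pairing v w
  · have : 0 ≤ t * pairing v w := mul_nonneg htpos.le hvw
    linarith [hu' v hv]
  · push_neg at hvw
    have hvB : v ∈ B := Finset.mem_filter.2 ⟨hv, hvw⟩
    have := htle v hvB
    rw [le_div_iff₀ (by linarith : (0:ℚ) < -pairing v w)] at this
    nlinarith

lemma span_active_of_extreme (S : Finset (E n)) {u : E n}
    (hu : u ∈ Set.extremePoints ℚ (dualPolytope (convexHull ℚ (S : Set (E n))))) :
    Submodule.span ℚ {v : E n | v ∈ S ∧ pairing v u = -1} = ⊤ := by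
  by_contra hne
  have hlt : Submodule.span ℚ {v : E n | v ∈ S ∧ pairing v u = -1} < ⊤ :=
    lt_top_iff_ne_top.2 hne
  obtain ⟨l, hl0, hlmap⟩ :=
    Submodule.exists_dual_map_eq_bot_of_lt_top hlt inferInstance
  have hlv : ∀ v ∈ S, pairing v u = -1 → l v = 0 := by
    intro v hvS hvu
    have hv : v ∈ Submodule.span ℚ {v : E n | v ∈ S ∧ pairing v u = -1} :=
      Submodule.subset_span ⟨hvS, hvu⟩
    have : l v ∈ Submodule.map l (Submodule.span ℚ {v : E n | v ∈ S ∧ pairing v u = -1}) :=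
      Submodule.mem_map_of_mem hv
    rw [hlmap] at this
    simpa using this
  obtain ⟨w, hwrepr⟩ := exists_repr_vec l
  have hw0 : w ≠ 0 := by
    intro h
    apply hl0
    apply LinearMap.ext
    intro x
    rw [← hwrepr x, h]
    simp [pairing]
  have horth : ∀ v ∈ S, pairing v u = -1 → pairing v w = 0 := by
    intro v hvS hvu; rw [hwrepr]; exact hlv v hvS hvu
  obtain ⟨t₁, ht₁, hm₁⟩ := perturb S (extremePoints_subset hu)
    (fun v hv h => le_of_eq (horth v hv h).symm)
  obtain ⟨t₂, ht₂, hm₂⟩ := perturb S (w := -w) (extremePoints_subset hu)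
    (fun v hv h => by rw [pairing_neg_right, horth v hv h, neg_zero])
  rw [mem_extremePoints] at hu
  have hseg : u ∈ openSegment ℚ (u + t₁ • w) (u + t₂ • (-w)) := by
    refine ⟨t₂ / (t₁ + t₂), t₁ / (t₁ + t₂), div_pos ht₂ (by linarith),
      div_pos ht₁ (by linarith), ?_, ?_⟩
    · field_simp
      ring
    · have hsum : (t₁ + t₂) ≠ 0 := by positivity
      match_scalars
      · field_simp
        ring
      · field_simp
        ring
  have := (hu.2 _ hm₁ _ hm₂ hseg).1
  have hwz : t₁ • w = 0 := by
    have h := this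
    have : u + t₁ • w = u + 0 := by rw [h, add_zero]
    exact add_left_cancel this
  exact hw0 (by simpa [ht₁.ne'] using hwz)

end Dual

section Facet
variable {n : ℕ}

lemma extremePoints_of_subset {A B : Set (E n)} (h : B ⊆ A) {x : E n}
    (hx : x ∈ Set.extremePoints ℚ A) (hxB : x ∈ B) : x ∈ Set.extremePoints ℚ B :=
  ⟨hxB, fun _ h₁ _ h₂ hseg => hx.2 (h h₁) (h h₂) hseg⟩

lemma pairing_zero_left (y : E n) : pairing 0 y = 0 := by simp [pairing]

/-- The active vertex set of `u`. -/
def activeSet {n : ℕ} (S : Finset (E n)) (u : E n) : Finset (E n) :=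
  S.filter (fun v => pairing v u = -1)

lemma facet_structure (hn : 1 ≤ n) (S : Finset (E n)) {P : Set (E n)}
    (hP : P = convexHull ℚ (S : Set (E n))) (h0 : (0 : E n) ∈ P)
    {u : E n} (hu : u ∈ Set.extremePoints ℚ (dualPolytope P)) :
    IsFacet P (facetOf P u) ∧
      facetOf P u = convexHull ℚ ((activeSet S u : Finset (E n)) : Set (E n)) ∧
      IsExtreme ℚ P (facetOf P u) ∧ (activeSet S u).Nonempty := by
  classical
  haveI : Nonempty (Fin n) := ⟨⟨0, hn⟩⟩
  subst hP
  have huP : u ∈ dualPolytope (convexHull ℚ (S : Set (E n))) := extremePoints_subset hu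
  have hspan := span_active_of_extreme S hu
  have hsetEq : {v : E n | v ∈ S ∧ pairing v u = -1} = ((activeSet S u : Finset (E n)) : Set (E n)) := by
    ext v; simp [activeSet]
  have hAne : (activeSet S u).Nonempty := by
    by_contra hemp
    rw [Finset.not_nonempty_iff_eq_empty] at hemp
    rw [hsetEq, hemp] at hspan
    simp only [Finset.coe_empty, Submodule.span_empty] at hspan
    exact absurd hspan bot_ne_top
  obtain ⟨v₀, hv₀⟩ := hAne
  have hv₀S : v₀ ∈ S := (Finset.mem_filter.1 hv₀).1
  have hv₀u : pairing v₀ u = -1 := (Finset.mem_filter.1 hv₀).2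
  set P : Set (E n) := convexHull ℚ (S : Set (E n)) with hPdef
  -- the bound on P
  have hbound : ∀ x ∈ P, -1 ≤ pairing x u := fun x hx => huP x hx
  -- the hull description of the facet
  have hhull : facetOf P u = convexHull ℚ ((activeSet S u : Finset (E n)) : Set (E n)) := by
    have := face_hull_eq S (pairL u) (-1) (fun v hv => hbound v (subset_convexHull ℚ _ hv))
    exact this
  -- nonemptiness
  have hfne : (facetOf P u).Nonempty :=
    ⟨v₀, subset_convexHull ℚ _ (Finset.mem_coe.2 hv₀S), hv₀u⟩
  -- properness
  have hne : facetOf P u ≠ P := by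
    intro h
    have h0F : (0 : E n) ∈ facetOf P u := by rw [h]; exact h0
    have := h0F.2
    rw [pairing_zero_left] at this
    norm_num at this
  -- extreme
  have hext : IsExtreme ℚ P (facetOf P u) :=
    isExtreme_of_exposed (pairL u) (-1) hbound trivial
  -- dimension
  have hdim : Module.finrank ℚ (affineSpan ℚ (facetOf P u)).direction = n - 1 := by
    rw [direction_affineSpan]
    have hupper : vectorSpan ℚ (facetOf P u) ≤ LinearMap.ker (pairL u) := by
      rw [vectorSpan]
      rw [Submodule.span_le]
      rintro z hz
      rw [Set.mem_vsub] at hz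
      obtain ⟨x, hx, y, hy, rfl⟩ := hz
      have hx' : pairing x u = -1 := hx.2
      have hy' : pairing y u = -1 := hy.2
      have : pairing (x - y) u = 0 := by
        have := pairing_add_left (x - y) y u
        rw [sub_add_cancel, hx', hy'] at this
        linarith
      simpa [LinearMap.mem_ker] using this
    have hker : Module.finrank ℚ (LinearMap.ker (pairL u)) = n - 1 := by
      have hsurj : Function.Surjective (pairL u) := by
        intro q
        refine ⟨(-q) • v₀, ?_⟩
        rw [pairL_apply, pairing_smul_left, hv₀u]
        ring
      have hrange : LinearMap.range (pairL u) = ⊤ := LinearMap.range_eq_top.2 hsurj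
      have := LinearMap.finrank_range_add_finrank_ker (pairL u)
      rw [hrange] at this
      have hfr : Module.finrank ℚ (⊤ : Submodule ℚ ℚ) = 1 := by
        rw [finrank_top]; exact Module.finrank_self ℚ
      rw [hfr, Module.finrank_fin_fun] at this
      omega
    -- lower bound
    have hW' : Submodule.span ℚ ((fun v => v - v₀) '' ((activeSet S u : Finset (E n)) : Set (E n)))
        ≤ vectorSpan ℚ (facetOf P u) := by
      rw [Submodule.span_le]
      rintro z ⟨v, hv, rfl⟩
      have hvF : v ∈ facetOf P u := by
        obtain ⟨hvS, hvu⟩ := Finset.mem_filter.1 (Finset.mem_coe.1 hv)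
        exact ⟨subset_convexHull ℚ _ (Finset.mem_coe.2 hvS), hvu⟩
      have hv₀F : v₀ ∈ facetOf P u :=
        ⟨subset_convexHull ℚ _ (Finset.mem_coe.2 hv₀S), hv₀u⟩
      exact vsub_mem_vectorSpan ℚ hvF hv₀F
    set W' := Submodule.span ℚ ((fun v => v - v₀) '' ((activeSet S u : Finset (E n)) : Set (E n)))
    have hsup : (⊤ : Submodule ℚ (E n)) ≤ W' ⊔ Submodule.span ℚ {v₀} := by
      rw [← hspan, hsetEq]
      rw [Submodule.span_le]
      intro v hv
      have : v = (v - v₀) + v₀ := by ring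
      rw [this]
      apply Submodule.add_mem
      · exact Submodule.mem_sup_left (Submodule.subset_span ⟨v, hv, rfl⟩)
      · exact Submodule.mem_sup_right (Submodule.subset_span rfl)
    have hn1 : n ≤ Module.finrank ℚ W' + 1 := by
      have h1 : Module.finrank ℚ (⊤ : Submodule ℚ (E n)) ≤
          Module.finrank ℚ (W' ⊔ Submodule.span ℚ {v₀} : Submodule ℚ (E n)) :=
        Submodule.finrank_mono hsup
      have h2 : Module.finrank ℚ (W' ⊔ Submodule.span ℚ {v₀} : Submodule ℚ (E n)) ≤
          Module.finrank ℚ W' + Module.finrank ℚ (Submodule.span ℚ ({v₀} : Set (E n))) := by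
        have := Submodule.finrank_sup_add_finrank_inf_eq W' (Submodule.span ℚ {v₀})
        omega
      have hv₀ne : v₀ ≠ 0 := by
        intro h
        rw [h, pairing_zero_left] at hv₀u
        norm_num at hv₀u
      have h3 : Module.finrank ℚ (Submodule.span ℚ ({v₀} : Set (E n))) ≤ 1 := by
        rw [show Submodule.span ℚ ({v₀} : Set (E n)) = ℚ ∙ v₀ from rfl,
          finrank_span_singleton hv₀ne]
      have h4 : Module.finrank ℚ (⊤ : Submodule ℚ (E n)) = n := by
        rw [finrank_top]; exact Module.finrank_fin_fun ℚ
      omega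
    have hle1 : Module.finrank ℚ (vectorSpan ℚ (facetOf P u)) ≤ n - 1 :=
      hker ▸ Submodule.finrank_mono hupper
    have hm := Submodule.finrank_mono hW'
    have hge1 : n - 1 ≤ Module.finrank ℚ (vectorSpan ℚ (facetOf P u)) :=
      le_trans (by omega) hm
    exact le_antisymm hle1 hge1
  exact ⟨⟨⟨u, -1, hbound, rfl, hfne, hne⟩, hdim⟩, hhull, hext, ⟨v₀, hv₀⟩⟩

end Facet

section VertexData
variable {n : ℕ}

lemma pairing_sub_right (x a b : E n) : pairing x (a - b) = pairing x a - pairing x b := by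
  have : a - b = a + (-1 : ℚ) • b := by module
  rw [this, pairing_add_right, pairing_smul_right]; ring

/-- All the data attached to a vertex `u` of the dual polytope. -/
lemma vertex_data (hn : 1 ≤ n) (S : Finset (E n)) {P : Set (E n)}
    (hP : P = convexHull ℚ (S : Set (E n))) (h0 : (0 : E n) ∈ P)
    (hsm : ∀ F : Set (E n), IsFacet P F →
      ∃ e : Fin n → E n, vertices F = Set.range e ∧ (∀ i, IsLatticePt (e i)) ∧
        LinearIndependent ℚ e ∧
        ∀ x : E n, IsLatticePt x → ∃ c : Fin n → ℤ, x = ∑ i, (c i : ℚ) • e i)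
    {u : E n} (hu : u ∈ Set.extremePoints ℚ (dualPolytope P)) :
    ∃ e ε : Fin n → E n,
      vertices (facetOf P u) = Set.range e ∧
      (∀ i, IsLatticePt (e i)) ∧
      Function.Injective e ∧
      (∀ x : E n, IsLatticePt x → ∃ c : Fin n → ℤ, x = ∑ i, (c i : ℚ) • e i) ∧
      (∀ k i, pairing (e k) (ε i) = if k = i then 1 else 0) ∧
      (∀ w w' : E n, (∀ k, pairing (e k) w = pairing (e k) w') → w = w') ∧
      u = -∑ i, ε i ∧
      (∀ i, e i ∈ facetOf P u) ∧
      (∀ i, e i ∈ Set.extremePoints ℚ P) ∧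
      facetOf P u = convexHull ℚ (Set.range e) ∧
      (∀ i, ∀ x ∈ facetOf P u, 0 ≤ pairing x (ε i)) := by
  classical
  haveI : Nonempty (Fin n) := ⟨⟨0, hn⟩⟩
  obtain ⟨hfacet, hhull, hext, hAne⟩ := facet_structure hn S hP h0 hu
  obtain ⟨e, hve, hlat, hlin, hzspan⟩ := hsm _ hfacet
  have hcard : Fintype.card (Fin n) = Module.finrank ℚ (E n) := by
    rw [Fintype.card_fin, Module.finrank_fin_fun]
  let B : Module.Basis (Fin n) ℚ (E n) := basisOfLinearIndependentOfCardEqFinrank hlin hcard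
  have hBe : ⇑B = e := coe_basisOfLinearIndependentOfCardEqFinrank hlin hcard
  set ε : Fin n → E n := fun i => (exists_repr_vec (B.coord i)).choose with hε
  have hεspec : ∀ i x, pairing x (ε i) = B.coord i x := fun i x =>
    (exists_repr_vec (B.coord i)).choose_spec x
  have hpair : ∀ k i, pairing (e k) (ε i) = if k = i then 1 else 0 := by
    intro k i
    rw [hεspec, Module.Basis.coord_apply, ← hBe, B.repr_self, Finsupp.single_apply]
  have hagree : ∀ w w' : E n, (∀ k, pairing (e k) w = pairing (e k) w') → w = w' := by
    intro w w' h
    have hd : ∀ x : E n, pairing x (w - w') = 0 := by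
      intro x
      have hx : x = ∑ k, B.repr x k • e k := by
        conv_lhs => rw [← B.sum_repr x]
        rw [hBe]
      rw [hx, pairing_sum_left]
      apply Finset.sum_eq_zero
      intro k _
      rw [pairing_smul_left, pairing_sub_right, h k]
      ring
    have := eq_zero_of_pairing_all hd
    exact sub_eq_zero.1 this
  have heF : ∀ i, e i ∈ facetOf P u := by
    intro i
    have : e i ∈ vertices (facetOf P u) := by rw [hve]; exact ⟨i, rfl⟩
    exact extremePoints_subset this
  have hu' : u = -∑ i, ε i := by
    apply hagree
    intro k
    rw [pairing_neg_right, pairing_sum_right]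
    have : ∑ i, pairing (e k) (ε i) = 1 := by
      rw [Finset.sum_eq_single k]
      · rw [hpair]; simp
      · intro i _ hik; rw [hpair]; simp [Ne.symm hik]
      · intro h; exact absurd (Finset.mem_univ k) h
    rw [this, (heF k).2]
  have heP : ∀ i, e i ∈ Set.extremePoints ℚ P := by
    intro i
    have : e i ∈ Set.extremePoints ℚ (facetOf P u) := by
      have := hve ▸ Set.mem_range_self (f := e) i
      exact this
    exact hext.extremePoints_subset_extremePoints this
  have hhull2 : facetOf P u = convexHull ℚ (Set.range e) := by
    rw [hhull, hull_eq_hull_extremePoints (activeSet S u)]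
    congr 1
    rw [← hhull]
    exact hve
  have hnonneg : ∀ i, ∀ x ∈ facetOf P u, 0 ≤ pairing x (ε i) := by
    intro i x hx
    rw [hhull2] at hx
    have := hull_le_bound (pairL (ε i)) 0 (fun v hv => ?_) x hx
    · exact this
    · obtain ⟨k, rfl⟩ := hv
      rw [pairL_apply, hpair]
      split <;> norm_num
  exact ⟨e, ε, hve, hlat, hlin.injective, hzspan, hpair, hagree, hu', heF, heP, hhull2, hnonneg⟩

end VertexData

section Edge
variable {n : ℕ}

/-- The edge of the dual polytope emanating from a vertex `u` in direction `ε i`. -/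
lemma edge_lemma (S : Finset (E n)) {P : Set (E n)}
    (hP : P = convexHull ℚ (S : Set (E n)))
    (T : Finset (E n)) (hTP : dualPolytope P = convexHull ℚ (T : Set (E n)))
    {u : E n} (hu : u ∈ Set.extremePoints ℚ (dualPolytope P)) (i : Fin n)
    (e ε : Fin n → E n)
    (hpair : ∀ k j, pairing (e k) (ε j) = if k = j then 1 else 0)
    (hagree : ∀ w w' : E n, (∀ k, pairing (e k) w = pairing (e k) w') → w = w')
    (heF : ∀ k, e k ∈ facetOf P u)
    (hnonneg : ∀ j, ∀ x ∈ facetOf P u, 0 ≤ pairing x (ε j)) :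
    ∃ (u' : E n) (τ : ℚ), 0 < τ ∧ u' = u + τ • ε i ∧ u' ∈ Set.extremePoints ℚ (dualPolytope P) ∧
      (∀ k, k ≠ i → pairing (e k) u' = -1) ∧
      (∀ z ∈ Set.extremePoints ℚ (dualPolytope P),
        (∀ k, k ≠ i → pairing (e k) z = -1) → z = u ∨ z = u') := by
  classical
  have huD : u ∈ dualPolytope P := extremePoints_subset hu
  have heP : ∀ k, e k ∈ P := fun k => (heF k).1
  have heu : ∀ k, pairing (e k) u = -1 := fun k => (heF k).2
  -- the exposing functional
  set w0 : E n := ∑ k ∈ Finset.univ.erase i, e k with hw0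
  set c : ℚ := -((Finset.univ.erase i).card : ℚ) with hc
  have hl : ∀ y : E n, pairL w0 y = ∑ k ∈ Finset.univ.erase i, pairing (e k) y := by
    intro y
    rw [pairL_apply, pairing_comm, hw0, pairing_sum_left]
  have hbnd : ∀ y ∈ dualPolytope P, c ≤ pairL w0 y := by
    intro y hy
    rw [hl]
    have : ∀ k ∈ Finset.univ.erase i, (-1 : ℚ) ≤ pairing (e k) y :=
      fun k _ => hy (e k) (heP k)
    calc c = ∑ _k ∈ Finset.univ.erase i, (-1 : ℚ) := by
              rw [Finset.sum_const, hc]; simp [nsmul_eq_mul]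
    _ ≤ _ := Finset.sum_le_sum this
  -- characterization of the face G
  have hGchar : ∀ y ∈ dualPolytope P,
      (pairL w0 y = c ↔ ∀ k, k ≠ i → pairing (e k) y = -1) := by
    intro y hy
    constructor
    · intro h k hk
      have hle : ∀ k ∈ Finset.univ.erase i, (-1 : ℚ) ≤ pairing (e k) y :=
        fun k _ => hy (e k) (heP k)
      have hsum : ∑ _k ∈ Finset.univ.erase i, (-1 : ℚ)
          = ∑ k ∈ Finset.univ.erase i, pairing (e k) y := by
        rw [← hl, h, hc]; rw [Finset.sum_const]; simp [nsmul_eq_mul]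
      have := (Finset.sum_eq_sum_iff_of_le hle).1 hsum k
        (Finset.mem_erase.2 ⟨hk, Finset.mem_univ k⟩)
      exact this.symm
    · intro h
      rw [hl]
      have : ∀ k ∈ Finset.univ.erase i, pairing (e k) y = -1 :=
        fun k hk => h k (Finset.mem_erase.1 hk).1
      rw [Finset.sum_congr rfl this, Finset.sum_const, hc]
      simp [nsmul_eq_mul]
  -- points of G lie on the line through u with direction ε i
  have hline : ∀ y ∈ dualPolytope P, (∀ k, k ≠ i → pairing (e k) y = -1) →
      y = u + (pairing (e i) y + 1) • ε i := by
    intro y _ hy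
    apply hagree
    intro k
    rw [pairing_add_right, pairing_smul_right, hpair, heu k]
    by_cases hk : k = i
    · subst hk; simp
    · rw [if_neg hk, hy k hk]; ring
  -- a point of G beyond u
  have hperturb : ∃ t : ℚ, 0 < t ∧ u + t • ε i ∈ dualPolytope P := by
    have huD' : u ∈ dualPolytope (convexHull ℚ (S : Set (E n))) := by rw [← hP]; exact huD
    obtain ⟨t, ht, hmem⟩ := perturb S huD' (fun v hv hvu =>
      hnonneg i v ⟨hP ▸ subset_convexHull ℚ _ (Finset.mem_coe.2 hv), hvu⟩)
    exact ⟨t, ht, by rw [hP]; exact hmem⟩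
  obtain ⟨t₀, ht₀, hy₀⟩ := hperturb
  have hy₀G : ∀ k, k ≠ i → pairing (e k) (u + t₀ • ε i) = -1 := by
    intro k hk
    rw [pairing_add_right, pairing_smul_right, hpair, if_neg hk, heu k]
    ring
  -- the active dual generators
  set TG : Finset (E n) := T.filter (fun v => pairL w0 v = c) with hTG
  have hface : {x ∈ convexHull ℚ (T : Set (E n)) | pairL w0 x = c}
      = convexHull ℚ (TG : Set (E n)) := by
    apply face_hull_eq
    intro v hv
    exact hbnd v (hTP ▸ subset_convexHull ℚ _ (Finset.mem_coe.2 hv))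
  have hGset : {y | y ∈ dualPolytope P ∧ ∀ k, k ≠ i → pairing (e k) y = -1}
      = convexHull ℚ (TG : Set (E n)) := by
    rw [← hface]
    ext y
    constructor
    · rintro ⟨hyD, hy⟩
      exact ⟨hTP ▸ hyD, (hGchar y hyD).2 hy⟩
    · rintro ⟨hyT, hy⟩
      have hyD : y ∈ dualPolytope P := by rw [hTP]; exact hyT
      exact ⟨hyD, (hGchar y hyD).1 hy⟩
  have hy₀mem : (u + t₀ • ε i) ∈ convexHull ℚ (TG : Set (E n)) := by
    rw [← hGset]; exact ⟨hy₀, hy₀G⟩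
  have hTGne : TG.Nonempty := by
    by_contra hne
    rw [Finset.not_nonempty_iff_eq_empty] at hne
    rw [hne] at hy₀mem
    simp at hy₀mem
  -- τ is the maximum of θ over TG
  set θ : E n → ℚ := fun y => pairing (e i) y + 1 with hθ
  set τ : ℚ := TG.sup' hTGne θ with hτ
  obtain ⟨wstar, hwstar, hwτ⟩ := Finset.exists_mem_eq_sup' hTGne θ
  have hwstarG : wstar ∈ dualPolytope P ∧ ∀ k, k ≠ i → pairing (e k) wstar = -1 := by
    have : wstar ∈ convexHull ℚ (TG : Set (E n)) :=
      subset_convexHull ℚ _ (Finset.mem_coe.2 hwstar)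
    rw [← hGset] at this
    exact this
  have hustar : wstar = u + τ • ε i := by
    have := hline wstar hwstarG.1 hwstarG.2
    rw [this, hτ, hwτ]
  set u' : E n := u + τ • ε i with hu'def
  have hu'G : u' ∈ dualPolytope P ∧ ∀ k, k ≠ i → pairing (e k) u' = -1 := by
    rw [← hustar]; exact hwstarG
  -- bound: θ ≤ τ on G
  have hθbound : ∀ y ∈ convexHull ℚ (TG : Set (E n)), θ y ≤ τ := by
    intro y hy
    have h2 := hull_le_bound (-pairL (e i)) (1 - τ) (fun v hv => ?_) y hy
    · simp only [LinearMap.neg_apply, pairL_apply] at h2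
      have hcm := pairing_comm y (e i)
      simp only [hθ]
      linarith
    · have hvτ : θ v ≤ τ := Finset.le_sup' θ (Finset.mem_coe.1 hv)
      simp only [hθ] at hvτ
      simp only [LinearMap.neg_apply, pairL_apply]
      have hcm := pairing_comm v (e i)
      linarith
  -- θ ≥ 0 on G
  have hθ0 : ∀ y ∈ dualPolytope P, 0 ≤ θ y := by
    intro y hy
    have := hy (e i) (heP i)
    rw [hθ]; simp only []; linarith
  have hτpos : 0 < τ := by
    have : θ (u + t₀ • ε i) ≤ τ := hθbound _ hy₀mem
    rw [hθ] at this
    simp only [] at this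
    rw [pairing_add_right, pairing_smul_right, hpair, if_pos rfl, heu i] at this
    linarith
  have hεne : ε i ≠ 0 := by
    intro h
    have := hpair i i
    rw [h] at this
    simp [pairing] at this
  have hune : u' ≠ u := by
    intro h
    rw [hu'def] at h
    have : τ • ε i = 0 := by
      have := congrArg (fun z => z - u) h
      simpa [add_sub_cancel_left] using this
    rcases smul_eq_zero.1 this with h' | h'
    · exact hτpos.ne' h'
    · exact hεne h'
  -- u' is an extreme point of the dual polytope
  have hGext : IsExtreme ℚ (dualPolytope P) {x ∈ dualPolytope P | pairL w0 x = c} :=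
    isExtreme_of_exposed (pairL w0) c hbnd trivial
  have hGeq : {x ∈ dualPolytope P | pairL w0 x = c}
      = convexHull ℚ (TG : Set (E n)) := by
    rw [← hGset]
    ext y
    exact ⟨fun ⟨h1, h2⟩ => ⟨h1, (hGchar y h1).1 h2⟩, fun ⟨h1, h2⟩ => ⟨h1, (hGchar y h1).2 h2⟩⟩
  have hu'ext : u' ∈ Set.extremePoints ℚ (dualPolytope P) := by
    apply hGext.extremePoints_subset_extremePoints
    rw [mem_extremePoints]
    refine ⟨⟨hu'G.1, (hGchar u' hu'G.1).2 hu'G.2⟩, ?_⟩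
    rintro x₁ ⟨hx₁D, hx₁c⟩ x₂ ⟨hx₂D, hx₂c⟩ hseg
    have hx₁G := (hGchar x₁ hx₁D).1 hx₁c
    have hx₂G := (hGchar x₂ hx₂D).1 hx₂c
    have hx₁l := hline x₁ hx₁D hx₁G
    have hx₂l := hline x₂ hx₂D hx₂G
    set θ₁ : ℚ := pairing (e i) x₁ + 1
    set θ₂ : ℚ := pairing (e i) x₂ + 1
    have hx₁m : x₁ ∈ convexHull ℚ (TG : Set (E n)) := by rw [← hGset]; exact ⟨hx₁D, hx₁G⟩
    have hx₂m : x₂ ∈ convexHull ℚ (TG : Set (E n)) := by rw [← hGset]; exact ⟨hx₂D, hx₂G⟩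
    have hθ₁ : θ₁ ≤ τ := hθbound x₁ hx₁m
    have hθ₂ : θ₂ ≤ τ := hθbound x₂ hx₂m
    obtain ⟨a, b, ha, hb, hab, hcomb⟩ := hseg
    have hτeq : a * θ₁ + b * θ₂ = τ := by
      have : pairing (e i) u' = a * pairing (e i) x₁ + b * pairing (e i) x₂ := by
        rw [← hcomb, pairing_add_right, pairing_smul_right, pairing_smul_right]
      rw [hu'def, pairing_add_right, pairing_smul_right, hpair, if_pos rfl, heu i] at this
      have hab' : a * θ₁ + b * θ₂ = a * pairing (e i) x₁ + b * pairing (e i) x₂ + 1 := by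
        simp only [θ₁, θ₂]; ring_nf; rw [← hab]; ring
      rw [hab', ← this]; ring
    have hθ₁τ : θ₁ = τ := by nlinarith [mul_le_mul_of_nonneg_left hθ₁ ha.le,
      mul_le_mul_of_nonneg_left hθ₂ hb.le]
    have hθ₂τ : θ₂ = τ := by nlinarith [mul_le_mul_of_nonneg_left hθ₁ ha.le,
      mul_le_mul_of_nonneg_left hθ₂ hb.le]
    constructor
    · rw [hx₁l, hθ₁τ, hu'def]
    · rw [hx₂l, hθ₂τ, hu'def]
  -- uniqueness
  have huniq : ∀ z ∈ Set.extremePoints ℚ (dualPolytope P),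
      (∀ k, k ≠ i → pairing (e k) z = -1) → z = u ∨ z = u' := by
    intro z hz hzG
    have hzD : z ∈ dualPolytope P := extremePoints_subset hz
    have hzl := hline z hzD hzG
    set θz : ℚ := pairing (e i) z + 1 with hθz
    have hz0 : 0 ≤ θz := hθ0 z hzD
    have hzm : z ∈ convexHull ℚ (TG : Set (E n)) := by rw [← hGset]; exact ⟨hzD, hzG⟩
    have hzτ : θz ≤ τ := hθbound z hzm
    rcases eq_or_lt_of_le hz0 with h0 | h0
    · left; rw [hzl, ← h0]; simp
    rcases eq_or_lt_of_le hzτ with hτz | hτz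
    · right; rw [hzl, hτz, hu'def]
    -- strictly interior: contradiction with extremeness
    exfalso
    have huG : u ∈ dualPolytope P ∧ ∀ k, k ≠ i → pairing (e k) u = -1 :=
      ⟨huD, fun k _ => heu k⟩
    have hseg : z ∈ openSegment ℚ u u' := by
      refine ⟨1 - θz / τ, θz / τ, ?_, div_pos h0 hτpos, by ring, ?_⟩
      · have : θz / τ < 1 := (div_lt_one hτpos).2 hτz
        linarith
      · rw [hzl, hu'def]
        match_scalars
        · ring
        · field_simp
    have := (mem_extremePoints.1 hz).2 _ (extremePoints_subset hu) _ hu'G.1 hseg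
    exact hune (this.2.trans this.1.symm)
  exact ⟨u', τ, hτpos, rfl, hu'ext, hu'G.2, huniq⟩

end Edge

section IndexLemma
variable {n : ℕ}

lemma index_lemma (hn : 1 ≤ n) {P : Set (E n)} {u u' : E n} {τ : ℚ} (hτ : 0 < τ) (i : Fin n)
    (huD : u ∈ dualPolytope P)
    (e ε e' ε' : Fin n → E n)
    (hpair : ∀ k j, pairing (e k) (ε j) = if k = j then 1 else 0)
    (hinj : Function.Injective e)
    (hzspan : ∀ x : E n, IsLatticePt x → ∃ c : Fin n → ℤ, x = ∑ k, (c k : ℚ) • e k)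
    (hlat : ∀ k, IsLatticePt (e k))
    (heP : ∀ k, e k ∈ Set.extremePoints ℚ P)
    (heF : ∀ k, e k ∈ facetOf P u)
    (hu'def : u' = u + τ • ε i)
    (hve' : vertices (facetOf P u') = Set.range e')
    (hpair' : ∀ k j, pairing (e' k) (ε' j) = if k = j then 1 else 0)
    (hagree' : ∀ w w' : E n, (∀ k, pairing (e' k) w = pairing (e' k) w') → w = w')
    (hinj' : Function.Injective e')
    (hlat' : ∀ m, IsLatticePt (e' m))
    (hzspan' : ∀ x : E n, IsLatticePt x → ∃ c : Fin n → ℤ, x = ∑ m, (c m : ℚ) • e' m)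
    (heF' : ∀ m, e' m ∈ facetOf P u')
    (hu'G : ∀ k, k ≠ i → pairing (e k) u' = -1) :
    ∃ j : Fin n, (∀ m, m ≠ j ↔ ∃ k, k ≠ i ∧ e k = e' m) ∧ ε' j = -ε i ∧
      (∀ m, m ≠ j → pairing (e' m) u = -1) := by
  classical
  have heu : ∀ k, pairing (e k) u = -1 := fun k => (heF k).2
  -- each e k (k ≠ i) is a vertex of the facet of u'
  have hkv : ∀ k, k ≠ i → ∃ m, e' m = e k := by
    intro k hk
    have hkF' : e k ∈ facetOf P u' := ⟨(heF k).1, hu'G k hk⟩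
    have : e k ∈ Set.extremePoints ℚ (facetOf P u') :=
      extremePoints_of_subset (fun x hx => hx.1) (heP k) hkF'
    have : e k ∈ Set.range e' := by rw [← hve']; exact this
    obtain ⟨m, hm⟩ := this
    exact ⟨m, hm⟩
  set χ : Fin n → Fin n := fun k => if h : ∃ m, e' m = e k then h.choose else k with hχ
  have hχspec : ∀ k, k ≠ i → e' (χ k) = e k := by
    intro k hk
    have h := hkv k hk
    simp only [hχ, dif_pos h]
    exact h.choose_spec
  set K : Finset (Fin n) := (Finset.univ.erase i).image χ with hK
  have hKcard : K.card = n - 1 := by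
    rw [hK, Finset.card_image_of_injOn]
    · rw [Finset.card_erase_of_mem (Finset.mem_univ i), Finset.card_univ, Fintype.card_fin]
    · intro k₁ h₁ k₂ h₂ hkk
      have h₁' : k₁ ≠ i := (Finset.mem_erase.1 h₁).1
      have h₂' : k₂ ≠ i := (Finset.mem_erase.1 h₂).1
      apply hinj
      rw [← hχspec k₁ h₁', ← hχspec k₂ h₂', hkk]
  have hcompl : (Finset.univ \ K).card = 1 := by
    rw [Finset.card_sdiff_of_subset (Finset.subset_univ K), Finset.card_univ, Fintype.card_fin, hKcard]
    omega
  obtain ⟨j, hj⟩ := Finset.card_eq_one.1 hcompl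
  have hmem_iff : ∀ m, m ∈ K ↔ m ≠ j := by
    intro m
    constructor
    · intro hm hmj
      have : m ∈ Finset.univ \ K := by rw [hj]; exact Finset.mem_singleton.2 hmj
      exact (Finset.mem_sdiff.1 this).2 hm
    · intro hmj
      by_contra hm
      have : m ∈ Finset.univ \ K := Finset.mem_sdiff.2 ⟨Finset.mem_univ m, hm⟩
      rw [hj, Finset.mem_singleton] at this
      exact hmj this
  have hiff : ∀ m, m ≠ j ↔ ∃ k, k ≠ i ∧ e k = e' m := by
    intro m
    rw [← hmem_iff]
    constructor
    · intro hm
      obtain ⟨k, hk, hkm⟩ := Finset.mem_image.1 hm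
      have hk' : k ≠ i := (Finset.mem_erase.1 hk).1
      exact ⟨k, hk', by rw [← hχspec k hk', hkm]⟩
    · rintro ⟨k, hk, hke⟩
      have : e' m = e' (χ k) := by rw [hχspec k hk, ← hke]
      have hmχ : m = χ k := hinj' this
      rw [hmχ]
      exact Finset.mem_image.2 ⟨k, Finset.mem_erase.2 ⟨hk, Finset.mem_univ k⟩, rfl⟩
  have hmu : ∀ m, m ≠ j → pairing (e' m) u = -1 := by
    intro m hm
    obtain ⟨k, hk, hke⟩ := (hiff m).1 hm
    rw [← hke]; exact heu k
  -- the integer coefficient argument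
  have hζ : ∀ m, m ≠ j → pairing (e' m) (ε i) = 0 := by
    intro m hm
    obtain ⟨k, hk, hke⟩ := (hiff m).1 hm
    rw [← hke, hpair, if_neg hk]
  obtain ⟨c, hc⟩ := hzspan (e' j) (hlat' j)
  have ha_eq : pairing (e' j) (ε i) = (c i : ℚ) := by
    rw [hc, pairing_sum_left, Finset.sum_eq_single i]
    · rw [pairing_smul_left, hpair, if_pos rfl, mul_one]
    · intro k _ hk; rw [pairing_smul_left, hpair, if_neg hk, mul_zero]
    · intro h; exact absurd (Finset.mem_univ i) h
  obtain ⟨d, hd⟩ := hzspan' (e i) (hlat i)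
  have hdj : (d j : ℚ) * pairing (e' j) (ε i) = 1 := by
    have h1 : pairing (e i) (ε i) = 1 := by rw [hpair, if_pos rfl]
    rw [hd, pairing_sum_left] at h1
    rw [Finset.sum_eq_single j] at h1
    · rw [← h1, pairing_smul_left]
    · intro m _ hm; rw [pairing_smul_left, hζ m hm, mul_zero]
    · intro h; exact absurd (Finset.mem_univ j) h
  have ha_nonpos : pairing (e' j) (ε i) ≤ 0 := by
    have h1 : pairing (e' j) u' = -1 := (heF' j).2
    have h2 : -1 ≤ pairing (e' j) u := huD (e' j) (heF' j).1
    rw [hu'def, pairing_add_right, pairing_smul_right] at h1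
    nlinarith
  have haint : (d j) * (c i) = 1 := by
    have : ((d j * c i : ℤ) : ℚ) = 1 := by
      push_cast
      rw [← ha_eq, hdj]
    exact_mod_cast this
  have hci : c i = -1 := by
    rcases Int.eq_one_or_neg_one_of_mul_eq_one' haint with ⟨_, h⟩ | ⟨_, h⟩
    · exfalso
      rw [ha_eq, h] at ha_nonpos
      norm_num at ha_nonpos
    · exact h
  have ha : pairing (e' j) (ε i) = -1 := by rw [ha_eq, hci]; norm_num
  -- the dual vector relation
  have hεrel : ε' j = -ε i := by
    apply hagree'
    intro m
    rw [hpair', pairing_neg_right]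
    by_cases hm : m = j
    · subst hm; rw [if_pos rfl, ha]; norm_num
    · rw [if_neg hm, hζ m hm]; norm_num
  exact ⟨j, hiff, hεrel, hmu⟩

end IndexLemma

/-- For a smooth reflexive polytope `P` of dimension `n`, the sum of all
vertices of the dual polytope `P*` is zero. -/
theorem sum_vertices_dual_eq_zero {n : ℕ} (hn : 1 ≤ n) (P : Set (E n))
    (hsmooth : IsSmoothPolytope P) :
    ∃ hfin : (vertices (dualPolytope P)).Finite, ∑ u ∈ hfin.toFinset, u = 0 := by
  classical
  obtain ⟨⟨⟨S, hSlat, hSP⟩, h0int, ⟨T, hTlat, hTP⟩⟩, hsm⟩ := hsmooth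
  have h0P : (0 : E n) ∈ P := interior_subset h0int
  have hVT : vertices (dualPolytope P) ⊆ (T : Set (E n)) := by
    rw [vertices, hTP]
    exact extremePoints_convexHull_subset
  have hfin : (vertices (dualPolytope P)).Finite := T.finite_toSet.subset hVT
  refine ⟨hfin, ?_⟩
  have hdata := fun (u : E n) (hu : u ∈ Set.extremePoints ℚ (dualPolytope P)) =>
    vertex_data hn S hSP h0P hsm hu
  choose eV εV hve hlat hinj hzspan hpair hagree hurepr heF heP hhull2 hnonneg using hdata
  -- adjacency
  have adj : ∀ u (hu : u ∈ Set.extremePoints ℚ (dualPolytope P)) (i : Fin n),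
      ∃ p : E n × Fin n, ∃ hp : p.1 ∈ Set.extremePoints ℚ (dualPolytope P),
        p.1 ≠ u ∧ εV p.1 hp p.2 = - εV u hu i ∧
        (∀ z, z ∈ Set.extremePoints ℚ (dualPolytope P) →
          (∀ k, k ≠ i → pairing (eV u hu k) z = -1) → z = u ∨ z = p.1) ∧
        (∀ m, m ≠ p.2 → pairing (eV p.1 hp m) u = -1) ∧
        (∀ m, m ≠ p.2 ↔ ∃ k, k ≠ i ∧ eV u hu k = eV p.1 hp m) := by
    intro u hu i
    obtain ⟨u', τ, hτ, hu'def, hu'V, hu'G, huniq⟩ :=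
      edge_lemma S hSP T hTP hu i (eV u hu) (εV u hu) (hpair u hu) (hagree u hu)
        (heF u hu) (hnonneg u hu)
    obtain ⟨j, hiff, hεrel, hmu⟩ := index_lemma hn hτ i (extremePoints_subset hu)
      (eV u hu) (εV u hu) (eV u' hu'V) (εV u' hu'V)
      (hpair u hu) (hinj u hu) (hzspan u hu) (hlat u hu) (heP u hu) (heF u hu)
      hu'def (hve u' hu'V) (hpair u' hu'V) (hagree u' hu'V) (hinj u' hu'V)
      (hlat u' hu'V) (hzspan u' hu'V) (heF u' hu'V) hu'G
    have hεne : εV u hu i ≠ 0 := by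
      intro h
      have := hpair u hu i i
      rw [h] at this
      simp [pairing] at this
    have hune : u' ≠ u := by
      rw [hu'def]
      intro h
      have h2 : τ • εV u hu i = 0 := by
        have := congrArg (fun z => z - u) h
        simpa using this
      rcases smul_eq_zero.1 h2 with h' | h'
      · exact hτ.ne' h'
      · exact hεne h'
    exact ⟨(u', j), hu'V, hune, hεrel, huniq, hmu, hiff⟩
  choose σ hσV hσne hσε hσuniq hσback hσiff using adj
  -- the sum via involution
  set f : E n × Fin n → E n := fun p =>
    if h : p.1 ∈ Set.extremePoints ℚ (dualPolytope P) then εV p.1 h p.2 else 0 with hf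
  set s : Finset (E n × Fin n) := hfin.toFinset ×ˢ (Finset.univ : Finset (Fin n)) with hs
  have memV : ∀ p : E n × Fin n, p ∈ s → p.1 ∈ Set.extremePoints ℚ (dualPolytope P) := by
    intro p hp
    have := (Finset.mem_product.1 hp).1
    exact (Set.Finite.mem_toFinset hfin).1 this
  have gmem : ∀ p (hp : p ∈ s), σ p.1 (memV p hp) p.2 ∈ s := by
    intro p hp
    rw [hs]
    refine Finset.mem_product.2 ⟨?_, Finset.mem_univ _⟩
    exact (Set.Finite.mem_toFinset hfin).2 (hσV p.1 (memV p hp) p.2)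
  have hg1 : ∀ p (hp : p ∈ s), f p + f (σ p.1 (memV p hp) p.2) = 0 := by
    intro p hp
    have hpV := memV p hp
    have hgV := hσV p.1 hpV p.2
    simp only [hf]
    rw [dif_pos hpV, dif_pos hgV, hσε p.1 hpV p.2]
    simp
  have hg3 : ∀ p (hp : p ∈ s), f p ≠ 0 → σ p.1 (memV p hp) p.2 ≠ p := by
    intro p hp _ h
    exact hσne p.1 (memV p hp) p.2 (congrArg Prod.fst h)
  have hg4 : ∀ p (hp : p ∈ s),
      σ (σ p.1 (memV p hp) p.2).1 (memV _ (gmem p hp)) (σ p.1 (memV p hp) p.2).2 = p := by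
    intro p hp
    have hpV := memV p hp
    set u := p.1 with hu
    set i := p.2 with hi
    set q := σ u hpV i with hq
    have hqV : q.1 ∈ Set.extremePoints ℚ (dualPolytope P) := hσV u hpV i
    have hback := hσback u hpV i
    have huor := hσuniq q.1 hqV q.2 u hpV hback
    have hune := hσne u hpV i
    have hfst : (σ q.1 hqV q.2).1 = u := by
      rcases huor with h | h
      · exact absurd h.symm hune
      · exact h.symm
    have hiffq := hσiff q.1 hqV q.2
    have hkey : ∀ (x : E n) (hx : x ∈ Set.extremePoints ℚ (dualPolytope P)) (_ : x = u) (m : Fin n),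
        eV x hx m = eV u hpV m := by
      intro x hx hxy m
      subst hxy
      rfl
    have hsnd : (σ q.1 hqV q.2).2 = i := by
      by_contra hne2
      have hine : i ≠ (σ q.1 hqV q.2).2 := fun h => hne2 h.symm
      obtain ⟨k, hk, hke⟩ := (hiffq i).1 hine
      have hiffp := hσiff u hpV i
      obtain ⟨k', hk', hk'e⟩ := (hiffp k).1 hk
      have : eV u hpV k' = eV u hpV i := by
        rw [hk'e, hke, hkey (σ q.1 hqV q.2).1 (hσV q.1 hqV q.2) hfst i]
      exact hk' (hinj u hpV this)
    exact Prod.ext_iff.2 ⟨hfst, hsnd⟩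
  have hsum : ∑ p ∈ s, f p = 0 :=
    Finset.sum_involution (fun p hp => σ p.1 (memV p hp) p.2) hg1 hg3 gmem hg4
  -- conclude
  have h1 : ∀ u ∈ hfin.toFinset, u = -∑ i : Fin n, f (u, i) := by
    intro u hu
    have huV : u ∈ Set.extremePoints ℚ (dualPolytope P) :=
      (Set.Finite.mem_toFinset hfin).1 hu
    have hfi : ∀ i : Fin n, f (u, i) = εV u huV i := by
      intro i
      simp only [hf]
      rw [dif_pos huV]
    calc u = -∑ i : Fin n, εV u huV i := hurepr u huV
      _ = -∑ i : Fin n, f (u, i) := by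
          rw [Finset.sum_congr rfl (fun i _ => hfi i)]
  calc ∑ u ∈ hfin.toFinset, u = ∑ u ∈ hfin.toFinset, -∑ i : Fin n, f (u, i) :=
        Finset.sum_congr rfl h1
    _ = -∑ u ∈ hfin.toFinset, ∑ i : Fin n, f (u, i) := by rw [Finset.sum_neg_distrib]
    _ = -∑ p ∈ s, f p := by rw [hs, Finset.sum_product]
    _ = 0 := by rw [hsum, neg_zero]


end Fano
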